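/- Let A be Hermitian positive definite, P full rank, A_c = P^H A P, and suppose e ∈ ℂ^n satisfies ‖e − P e_c‖ ≤ ρ ‖e‖ for some e_c and 0 < ρ < 1 (i.e., e is interpolated with relative accuracy ρ). If (λ, e) is a normalized eigenpair of A with Ae = λ e and ‖e‖ = 1, then the Rayleigh quotient of e_c in the pencil (A_c, T_c), T_c = P^H P, approximates λ with error bounded by C(‖A‖) ρ for an explicit constant C depending on ‖A‖ and λ: |⟨A_c e_c, e_c⟩/⟨T_c e_c, e_c⟩ − λ| ≤ (‖A‖ + λ) (2ρ + ρ²)/(1−ρ)². -/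

import Mathlib

/-!
Write `v = P e_c` and `S = A - λ`. Since `S e = 0` and `S` is Hermitian, the Rayleigh defect
`⟨S v, v⟩` of `v` equals that of the interpolation error `e - v`, so it is quadratic in the error:
`|⟨S v, v⟩| ≤ (‖A‖ + λ) ρ²`, where `λ ≥ 0` by positivity of `A`. Dividing by `‖v‖² ≥ (1 - ρ)²`
bounds the error by `(‖A‖ + λ) ρ² / (1 - ρ)²`.
-/

open Matrix
open scoped ComplexOrder InnerProductSpace

section RayleighQuotient

variable {𝕜 E : Type*} [RCLike 𝕜] [NormedAddCommGroup E] [InnerProductSpace 𝕜 E]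

theorem LinearMap.IsSymmetric.inner_sub_map_sub_of_map_eq_zero {S : E →ₗ[𝕜] E}
    (hS : S.IsSymmetric) {e : E} (he : S e = 0) (x : E) :
    ⟪e - x, S (e - x)⟫_𝕜 = ⟪x, S x⟫_𝕜 := by
  rw [map_sub, he, zero_sub, inner_neg_right, inner_sub_left, ← hS e, he, inner_zero_left,
    zero_sub, neg_neg]

theorem norm_sub_div_norm_le_of_norm_sub_le {e v : E} (he : e ≠ 0) {ρ : ℝ} (hρ : ρ < 1)
    (hv : ‖e - v‖ ≤ ρ * ‖e‖) : ‖e - v‖ / ‖v‖ ≤ ρ / (1 - ρ) := by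
  have he' : 0 < ‖e‖ := norm_pos_iff.mpr he
  have hv' : (1 - ρ) * ‖e‖ ≤ ‖v‖ := by
    have := norm_sub_norm_le e (e - v)
    rw [sub_sub_cancel] at this
    linarith
  have hρ0 : 0 ≤ ρ := nonneg_of_mul_nonneg_left ((norm_nonneg _).trans hv) he'
  have h1ρ : 0 < 1 - ρ := by linarith
  rw [div_le_div_iff₀ ((mul_pos h1ρ he').trans_le hv') h1ρ]
  nlinarith [mul_le_mul_of_nonneg_left hv' hρ0]

theorem norm_inner_sub_smul_id_apply_le (T : E →L[𝕜] E) (μ : ℝ) (x : E) :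
    ‖⟪x, (T - (μ : 𝕜) • ContinuousLinearMap.id 𝕜 E) x⟫_𝕜‖ ≤ (‖T‖ + |μ|) * ‖x‖ ^ 2 := by
  have hS : ‖T - (μ : 𝕜) • ContinuousLinearMap.id 𝕜 E‖ ≤ ‖T‖ + |μ| :=
    calc _ ≤ ‖T‖ + ‖(μ : 𝕜)‖ * ‖ContinuousLinearMap.id 𝕜 E‖ :=
          norm_sub_le_of_le le_rfl (norm_smul_le _ _)
      _ ≤ ‖T‖ + |μ| * 1 := by
        rw [RCLike.norm_ofReal]
        gcongr
        exact ContinuousLinearMap.norm_id_le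
      _ = _ := by rw [mul_one]
  calc _ ≤ ‖x‖ * ‖(T - (μ : 𝕜) • ContinuousLinearMap.id 𝕜 E) x‖ := norm_inner_le_norm _ _
    _ ≤ ‖x‖ * ((‖T‖ + |μ|) * ‖x‖) := by
      gcongr
      exact (ContinuousLinearMap.le_opNorm _ _).trans (by gcongr)
    _ = _ := by ring

theorem norm_rayleigh_sub_eigenvalue_le {T : E →L[𝕜] E} (hT : (T : E →ₗ[𝕜] E).IsSymmetric)
    {μ : ℝ} {e : E} (he : T e = (μ : 𝕜) • e) (he0 : e ≠ 0) {ρ : ℝ} (hρ : ρ < 1) {v : E}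
    (hv : ‖e - v‖ ≤ ρ * ‖e‖) :
    ‖⟪v, T v⟫_𝕜 / ⟪v, v⟫_𝕜 - μ‖ ≤ (‖T‖ + |μ|) * (ρ / (1 - ρ)) ^ 2 := by
  set S := T - (μ : 𝕜) • ContinuousLinearMap.id 𝕜 E
  have hS : (S : E →ₗ[𝕜] E).IsSymmetric := fun x y ↦ by
    simpa [S, inner_sub_left, inner_sub_right, inner_smul_left, inner_smul_right] using hT x y
  have hSe : S e = 0 := by simp [S, he]
  have hv0 : v ≠ 0 := by
    rintro rfl
    rw [sub_zero] at hv
    nlinarith [norm_pos_iff.mpr he0]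
  have hvv : ⟪v, v⟫_𝕜 = (‖v‖ : 𝕜) ^ 2 := inner_self_eq_norm_sq_to_K v
  have hvv0 : ⟪v, v⟫_𝕜 ≠ 0 := inner_self_ne_zero.mpr hv0
  have hdefect : ⟪v, T v⟫_𝕜 / ⟪v, v⟫_𝕜 - μ = ⟪e - v, S (e - v)⟫_𝕜 / ⟪v, v⟫_𝕜 := by
    have hshift : ⟪e - v, S (e - v)⟫_𝕜 = ⟪v, S v⟫_𝕜 := hS.inner_sub_map_sub_of_map_eq_zero hSe v
    have hSv : ⟪v, S v⟫_𝕜 = ⟪v, T v⟫_𝕜 - μ * ⟪v, v⟫_𝕜 := by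
      simp [S, inner_sub_right, inner_smul_right]
    rw [hshift, hSv, sub_div, mul_div_cancel_right₀ _ hvv0]
  calc _ = ‖⟪e - v, S (e - v)⟫_𝕜‖ / ‖v‖ ^ 2 := by
        rw [hdefect, norm_div, hvv, norm_pow, RCLike.norm_ofReal, abs_norm]
    _ ≤ (‖T‖ + |μ|) * ‖e - v‖ ^ 2 / ‖v‖ ^ 2 := by
        gcongr
        exact norm_inner_sub_smul_id_apply_le T μ (e - v)
    _ = (‖T‖ + |μ|) * (‖e - v‖ / ‖v‖) ^ 2 := by rw [div_pow, mul_div_assoc]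
    _ ≤ _ := by
        gcongr (‖T‖ + |μ|) * ?_
        exact pow_le_pow_left₀ (by positivity) (norm_sub_div_norm_le_of_norm_sub_le he0 hρ hv) 2

end RayleighQuotient

theorem Matrix.PosSemidef.nonneg_of_mulVec_eq_smul {𝕜 n : Type*} [RCLike 𝕜] [Fintype n]
    {A : Matrix n n 𝕜} (hA : A.PosSemidef) {μ : ℝ} {x : n → 𝕜} (hx : x ≠ 0)
    (h : A *ᵥ x = (μ : 𝕜) • x) : 0 ≤ μ := by
  have hq := hA.dotProduct_mulVec_nonneg x
  obtain ⟨r, hr, hrx⟩ := RCLike.pos_iff_exists_ofReal.mp (dotProduct_star_self_pos_iff.mpr hx)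
  rw [h, dotProduct_smul, smul_eq_mul, ← hrx, ← RCLike.ofReal_mul, RCLike.ofReal_nonneg] at hq
  exact nonneg_of_mul_nonneg_left hq hr

theorem Matrix.star_dotProduct_conjTranspose_mul_mulVec {R m n : Type*} [CommSemiring R]
    [StarRing R] [Fintype m] [Fintype n] (P : Matrix n m R) (x : m → R) :
    star x ⬝ᵥ (Pᴴ * P) *ᵥ x = star (P *ᵥ x) ⬝ᵥ P *ᵥ x := by
  rw [← mulVec_mulVec, dotProduct_mulVec, ← star_mulVec]

theorem Matrix.star_dotProduct_conjTranspose_mul_mul_mulVec {R m n : Type*} [CommSemiring R]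
    [StarRing R] [Fintype m] [Fintype n] (A : Matrix n n R) (P : Matrix n m R) (x : m → R) :
    star x ⬝ᵥ (Pᴴ * A * P) *ᵥ x = star (P *ᵥ x) ⬝ᵥ A *ᵥ P *ᵥ x := by
  rw [← mulVec_mulVec, ← mulVec_mulVec, dotProduct_mulVec, ← star_mulVec]

theorem stmt11_general {n m : ℕ} (A : Matrix (Fin n) (Fin n) ℂ) (hA : A.PosDef)
    (P : Matrix (Fin n) (Fin m) ℂ)
    (enorm : (Fin n → ℂ) → ℝ)
    (henorm : ∀ v, enorm v = Real.sqrt (∑ i, ‖v i‖ ^ 2))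
    (e : Fin n → ℂ) (ec : Fin m → ℂ)
    (ρ : ℝ) (hρ0 : 0 < ρ) (hρ1 : ρ < 1)
    (hinterp : enorm (e - P.mulVec ec) ≤ ρ * enorm e)
    (lam : ℝ) (hEig : A.mulVec e = (lam : ℂ) • e) (hnorm : enorm e = 1) :
    ‖(star ec ⬝ᵥ (Pᴴ * A * P).mulVec ec) / (star ec ⬝ᵥ (Pᴴ * P).mulVec ec)
        - (lam : ℂ)‖
      ≤ (‖LinearMap.toContinuousLinearMap (Matrix.toEuclideanLin A)‖ + lam) *
          (2 * ρ + ρ ^ 2) / (1 - ρ) ^ 2 := by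
  set T := LinearMap.toContinuousLinearMap (Matrix.toEuclideanLin A)
  have hT : (T : EuclideanSpace ℂ (Fin n) →ₗ[ℂ] _).IsSymmetric := by
    simpa [T] using isSymmetric_toEuclideanLin_iff.mpr hA.isHermitian
  have henorm' (x : Fin n → ℂ) : enorm x = ‖WithLp.toLp 2 x‖ := by
    rw [henorm, EuclideanSpace.norm_eq]
  have he0 : e ≠ 0 := by
    rintro rfl
    simp [henorm] at hnorm
  have hlam : 0 ≤ lam := hA.posSemidef.nonneg_of_mulVec_eq_smul he0 hEig
  have hrayleigh := norm_rayleigh_sub_eigenvalue_le hT (e := WithLp.toLp 2 e)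
    (congrArg (WithLp.toLp 2) hEig) (by simpa using he0) hρ1 (v := WithLp.toLp 2 (P *ᵥ ec))
    (by simpa [henorm'] using hinterp)
  -- `⟪toLp x, toLp y⟫` unfolds to `y ⬝ᵥ star x`, so `hrayleigh` then applies verbatim.
  rw [star_dotProduct_conjTranspose_mul_mul_mulVec, star_dotProduct_conjTranspose_mul_mulVec,
    dotProduct_comm, dotProduct_comm (star _)]
  calc _ ≤ (‖T‖ + |lam|) * (ρ / (1 - ρ)) ^ 2 := hrayleigh
    _ ≤ _ := by
      rw [abs_of_nonneg hlam, div_pow, ← mul_div_assoc]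
      gcongr
      nlinarith

/-- if a normalized eigenpair `(λ, e)` of the HPD matrix `A` is
interpolated with relative accuracy `ρ` by a coarse vector `e_c` (i.e.
`‖e - P e_c‖ ≤ ρ ‖e‖` in the Euclidean norm), then the generalized Rayleigh
quotient of `e_c` in the pencil `(Pᴴ A P, Pᴴ P)` approximates `λ` with error at
most `(‖A‖ + λ)(2ρ + ρ²)/(1 - ρ)²`, where `‖A‖` is the spectral norm. -/
theorem stmt11 {n m : ℕ} (A : Matrix (Fin n) (Fin n) ℂ) (hA : A.PosDef)
    (P : Matrix (Fin n) (Fin m) ℂ) (hP : Function.Injective P.mulVec)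
    (enorm : (Fin n → ℂ) → ℝ)
    (henorm : ∀ v, enorm v = Real.sqrt (∑ i, ‖v i‖ ^ 2))
    (e : Fin n → ℂ) (ec : Fin m → ℂ) (hPec : P.mulVec ec ≠ 0)
    (ρ : ℝ) (hρ0 : 0 < ρ) (hρ1 : ρ < 1)
    (hinterp : enorm (e - P.mulVec ec) ≤ ρ * enorm e)
    (lam : ℝ) (hEig : A.mulVec e = (lam : ℂ) • e) (hnorm : enorm e = 1) :
    ‖(star ec ⬝ᵥ (Pᴴ * A * P).mulVec ec) / (star ec ⬝ᵥ (Pᴴ * P).mulVec ec)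
        - (lam : ℂ)‖
      ≤ (‖LinearMap.toContinuousLinearMap (Matrix.toEuclideanLin A)‖ + lam) *
          (2 * ρ + ρ ^ 2) / (1 - ρ) ^ 2 :=
  stmt11_general A hA P enorm henorm e ec ρ hρ0 hρ1 hinterp lam hEig hnorm
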